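/- arXiv:2003.09756 — 6 statements merged into one kernel-verified Lean document; each statement's English description precedes it below -/
import Mathlib

section
/- If w ~ Gamma with density p(w) = w e^{-w} on (0,∞), then for every ξ ∈ ℝ, E[w · sinc(π w ξ)^2] = 2/(4π²ξ² + 1), where sinc(x) = sin(x)/x (with sinc(0) = 1). -/
open MeasureTheory Real

/-! Since `x² sinc(a x)² = sin(a x)² / a² = (1 - cos(2 a x)) / (2 a²)`, the integral reduces to the
Laplace transform `∫₀^∞ e^{-x} cos(b x) dx = Re (1 / (1 - i b)) = 1 / (1 + b²)` at `b = 2 a = 2 π ξ`.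
For `ξ = 0` it is `∫₀^∞ x² e^{-x} dx = Γ(3) = 2`. -/

/-- `sinc x = sin x / x`, with `sinc 0 = 1`. -/
noncomputable def sinc (x : ℝ) : ℝ := if x = 0 then 1 else Real.sin x / x

open Complex in
lemma re_exp_neg_one_add_mul_I (b x : ℝ) :
    (Complex.exp ((-1 + b * I) * x)).re = Real.exp (-x) * Real.cos (b * x) := by
  rw [Complex.exp_re]
  simp

lemma integrableOn_exp_neg_mul_cos (b : ℝ) :
    IntegrableOn (fun x ↦ Real.exp (-x) * Real.cos (b * x)) (Set.Ioi 0) := by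
  have h := (integrableOn_exp_mul_complex_Ioi (a := -1 + b * Complex.I) (by simp) 0).re
  simp only [RCLike.re_to_complex, re_exp_neg_one_add_mul_I] at h
  exact h

lemma integral_exp_neg_mul_cos (b : ℝ) :
    ∫ x in Set.Ioi 0, Real.exp (-x) * Real.cos (b * x) = 1 / (1 + b ^ 2) := by
  have ha : (-1 + b * Complex.I).re < 0 := by simp
  calc ∫ x in Set.Ioi 0, Real.exp (-x) * Real.cos (b * x)
      = ∫ x : ℝ in Set.Ioi 0, (Complex.exp ((-1 + b * Complex.I) * x)).re := by
        simp only [re_exp_neg_one_add_mul_I]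
    _ = (∫ x : ℝ in Set.Ioi 0, Complex.exp ((-1 + b * Complex.I) * x)).re :=
        integral_re (integrableOn_exp_mul_complex_Ioi ha 0)
    _ = 1 / (1 + b ^ 2) := by
        rw [integral_exp_mul_complex_Ioi ha 0]
        simp [Complex.div_re, Complex.normSq_apply, sq]

lemma integral_exp_neg_mul_sin_sq (a : ℝ) :
    ∫ x in Set.Ioi 0, Real.exp (-x) * Real.sin (a * x) ^ 2 = 2 * a ^ 2 / (1 + 4 * a ^ 2) := by
  have half_angle : ∀ x, Real.exp (-x) * Real.sin (a * x) ^ 2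
      = (Real.exp (-x) - Real.exp (-x) * Real.cos (2 * a * x)) / 2 := by
    intro x
    rw [Real.sin_sq_eq_half_sub, mul_assoc 2 a x]
    ring
  simp only [half_angle]
  rw [integral_div, integral_sub (integrableOn_exp_neg_Ioi 0) (integrableOn_exp_neg_mul_cos _),
    integral_exp_neg_Ioi_zero, integral_exp_neg_mul_cos]
  field_simp
  ring

lemma integral_exp_neg_mul_sq : ∫ x in Set.Ioi 0, Real.exp (-x) * x ^ 2 = 2 := by
  have h := Real.Gamma_eq_integral (s := 3) (by norm_num)
  norm_num at h
  exact h.symm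

lemma sq_mul_sinc_sq (x : ℝ) : x ^ 2 * _root_.sinc x ^ 2 = Real.sin x ^ 2 := by
  rcases eq_or_ne x 0 with rfl | hx
  · simp
  · rw [_root_.sinc, if_neg hx]
    field_simp

lemma integral_exp_neg_mul_sq_mul_sinc_sq (a : ℝ) :
    ∫ x in Set.Ioi 0, Real.exp (-x) * (x ^ 2 * _root_.sinc (a * x) ^ 2) = 2 / (1 + 4 * a ^ 2) := by
  rcases eq_or_ne a 0 with rfl | ha
  · simpa [_root_.sinc] using integral_exp_neg_mul_sq
  · have h : ∀ x, Real.exp (-x) * (x ^ 2 * _root_.sinc (a * x) ^ 2)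
        = Real.exp (-x) * Real.sin (a * x) ^ 2 / a ^ 2 := by
      intro x
      rw [← sq_mul_sinc_sq]
      field_simp
    simp only [h]
    rw [integral_div, integral_exp_neg_mul_sin_sq]
    field_simp

/-- If `w` has density `p(w) = w e^{-w}` on `(0,∞)`, then
`E[w · sinc(π w ξ)²] = 2/(4π²ξ² + 1)`. -/
theorem expectation_gamma_sinc_sq (ξ : ℝ) :
    (∫ w in Set.Ioi (0 : ℝ), (w * Real.exp (-w)) * (w * (_root_.sinc (π * w * ξ))^2)) =
      2 / (4 * π^2 * ξ^2 + 1) := by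
  have integrand_eq : ∀ w, (w * Real.exp (-w)) * (w * (_root_.sinc (π * w * ξ))^2)
      = Real.exp (-w) * (w ^ 2 * _root_.sinc ((π * ξ) * w) ^ 2) := by
    intro w
    ring_nf
  simp only [integrand_eq]
  rw [integral_exp_neg_mul_sq_mul_sinc_sq]
  ring
end

section
/- Let w > 0, let z be uniformly distributed on [0, w], and let x, y ∈ ℝ. Define h(t) = round((t − z)/w). Then the probability over z that h(x) = h(y) equals max(0, 1 − |x − y|/w). -/
open MeasureTheory Set

private lemma floor_char (w : ℝ) (hw : 0 < w) (a d : ℝ) (ha0 : 0 ≤ a) (haw : a < w)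
    (hd0 : 0 ≤ d) (z : ℝ) (hz0 : 0 ≤ z) (hzw : z ≤ w) :
    (⌊(a - z + d) / w⌋ = ⌊(a - z) / w⌋) ↔
      z ∈ Icc 0 a ∩ Ioi (a + d - w) ∪ Ioc (a + d) w := by
  rcases le_or_gt z a with hza | hza
  · have hv : ⌊(a - z) / w⌋ = 0 := by
      rw [Int.floor_eq_iff]
      push_cast
      constructor
      · exact div_nonneg (by linarith) hw.le
      · rw [zero_add]
        exact (div_lt_one hw).2 (by linarith)
    have hu0 : 0 ≤ (a - z + d) / w := div_nonneg (by linarith) hw.le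
    rw [hv, Int.floor_eq_iff]
    push_cast
    constructor
    · rintro ⟨-, h1⟩
      rw [zero_add, div_lt_one hw] at h1
      exact Or.inl ⟨⟨hz0, hza⟩, by simp; linarith⟩
    · intro h
      refine ⟨hu0, ?_⟩
      rw [zero_add, div_lt_one hw]
      rcases h with ⟨-, h2⟩ | ⟨h1, -⟩
      · simp only [mem_Ioi] at h2; linarith
      · linarith
  · have hv : ⌊(a - z) / w⌋ = -1 := by
      rw [Int.floor_eq_iff]
      push_cast
      constructor
      · rw [le_div_iff₀ hw]; linarith
      · have : (a - z) / w < 0 := div_neg_of_neg_of_pos (by linarith) hw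
        linarith
    rw [hv, Int.floor_eq_iff]
    push_cast
    constructor
    · rintro ⟨-, h1⟩
      have : a - z + d < 0 := by
        by_contra hc
        push_neg at hc
        have := div_nonneg hc hw.le
        linarith
      exact Or.inr ⟨by linarith, hzw⟩
    · intro h
      have hzd : a + d < z := by
        rcases h with ⟨⟨-, h2⟩, -⟩ | ⟨h1, -⟩
        · linarith
        · exact h1
      constructor
      · rw [le_div_iff₀ hw]; linarith
      · have : (a - z + d) / w < 0 := div_neg_of_neg_of_pos (by linarith) hw
        linarith

private lemma core (w : ℝ) (hw : 0 < w) (a d : ℝ) (ha0 : 0 ≤ a) (haw : a < w)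
    (hd0 : 0 ≤ d) (hdw : d < w) :
    volume {z ∈ Icc (0 : ℝ) w | ⌊(a - z + d) / w⌋ = ⌊(a - z) / w⌋}
      = ENNReal.ofReal (w - d) := by
  have hset : {z ∈ Icc (0 : ℝ) w | ⌊(a - z + d) / w⌋ = ⌊(a - z) / w⌋}
      = Icc 0 a ∩ Ioi (a + d - w) ∪ Ioc (a + d) w := by
    ext z
    simp only [mem_sep_iff]
    constructor
    · rintro ⟨⟨hz0, hzw⟩, h⟩
      exact (floor_char w hw a d ha0 haw hd0 z hz0 hzw).1 h
    · intro h
      have hz : z ∈ Icc 0 w := by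
        rcases h with ⟨h1, -⟩ | ⟨h1, h2⟩
        · exact ⟨h1.1, le_trans h1.2 haw.le⟩
        · exact ⟨by linarith, h2⟩
      exact ⟨hz, (floor_char w hw a d ha0 haw hd0 z hz.1 hz.2).2 h⟩
  rw [hset]
  set m : ℝ := max 0 (a + d - w) with hm
  have hS1 : volume (Icc 0 a ∩ Ioi (a + d - w)) = ENNReal.ofReal (a - m) := by
    apply le_antisymm
    · calc volume (Icc 0 a ∩ Ioi (a + d - w)) ≤ volume (Icc m a) := by
            apply measure_mono
            rintro z ⟨⟨h1, h2⟩, h3⟩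
            simp only [mem_Ioi] at h3
            exact ⟨max_le h1 h3.le, h2⟩
        _ = ENNReal.ofReal (a - m) := Real.volume_Icc
    · calc ENNReal.ofReal (a - m) = volume (Ioc m a) := Real.volume_Ioc.symm
        _ ≤ volume (Icc 0 a ∩ Ioi (a + d - w)) := by
            apply measure_mono
            rintro z ⟨h1, h2⟩
            have hz0 : 0 ≤ z := le_of_lt (lt_of_le_of_lt (le_max_left _ _) h1)
            have hzd : a + d - w < z := lt_of_le_of_lt (le_max_right _ _) h1
            exact ⟨⟨hz0, h2⟩, hzd⟩
  have hdisj : Disjoint (Icc 0 a ∩ Ioi (a + d - w)) (Ioc (a + d) w) := by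
    apply Set.disjoint_left.2
    rintro z ⟨⟨-, h2⟩, -⟩ ⟨h3, -⟩
    linarith
  rw [measure_union hdisj measurableSet_Ioc, hS1, Real.volume_Ioc]
  rcases le_or_gt (a + d) w with hcase | hcase
  · have hm0 : m = 0 := max_eq_left (by linarith)
    rw [hm0, sub_zero, ← ENNReal.ofReal_add ha0 (by linarith)]
    congr 1; ring
  · have hm0 : m = a + d - w := max_eq_right (by linarith)
    rw [hm0, show ENNReal.ofReal (w - (a + d)) = 0 from
      ENNReal.ofReal_of_nonpos (by linarith), add_zero]
    congr 1; ring

private lemma main2 (w : ℝ) (hw : 0 < w) (x y : ℝ) (hxy : y ≤ x) :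
    (volume {z ∈ Icc (0 : ℝ) w |
        round ((x - z) / w) = round ((y - z) / w)}).toReal / w =
      max 0 (1 - |x - y| / w) := by
  have hw' : w ≠ 0 := hw.ne'
  have habs : |x - y| = x - y := abs_of_nonneg (by linarith)
  rcases lt_or_ge (x - y) w with hdw | hdw
  · -- main case
    set m : ℤ := ⌊(y + w / 2) / w⌋ with hmdef
    set a : ℝ := y + w / 2 - m * w with hadef
    have h1 : (m : ℝ) * w ≤ y + w / 2 := (le_div_iff₀ hw).1 (Int.floor_le _)
    have h2 : y + w / 2 < ((m : ℝ) + 1) * w := by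
      have := Int.lt_floor_add_one ((y + w / 2) / w)
      rw [div_lt_iff₀ hw] at this
      push_cast at this
      exact this
    have ha0 : 0 ≤ a := by rw [hadef]; linarith
    have haw : a < w := by rw [hadef]; nlinarith [h2]
    have key : ∀ z : ℝ, (round ((x - z) / w) = round ((y - z) / w)) ↔
        ⌊(a - z + (x - y)) / w⌋ = ⌊(a - z) / w⌋ := by
      intro z
      have hx : (x - z) / w + 1 / 2 = (a - z + (x - y)) / w + (m : ℝ) := by
        rw [hadef]; field_simp; ring
      have hy : (y - z) / w + 1 / 2 = (a - z) / w + (m : ℝ) := by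
        rw [hadef]; field_simp; ring
      rw [round_eq, round_eq, hx, hy, Int.floor_add_intCast, Int.floor_add_intCast]
      omega
    have hseteq : {z ∈ Icc (0 : ℝ) w | round ((x - z) / w) = round ((y - z) / w)}
        = {z ∈ Icc (0 : ℝ) w | ⌊(a - z + (x - y)) / w⌋ = ⌊(a - z) / w⌋} := by
      ext z
      simp only [mem_sep_iff]
      rw [key z]
    rw [hseteq, core w hw a (x - y) ha0 haw (by linarith) hdw,
      ENNReal.toReal_ofReal (by linarith), habs]
    rw [max_eq_right (by rw [sub_nonneg, div_le_one hw]; linarith)]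
    field_simp
  · -- empty case
    have hempty : {z ∈ Icc (0 : ℝ) w | round ((x - z) / w) = round ((y - z) / w)} = ∅ := by
      ext z
      simp only [mem_sep_iff, mem_empty_iff_false, iff_false, not_and]
      intro hz h
      have hsplit : (x - z) / w = (y - z) / w + (x - y) / w := by ring
      have hge : 1 ≤ (x - y) / w := (le_div_iff₀ hw).2 (by linarith)
      have h1 : (y - z) / w + 1 ≤ (x - z) / w := by linarith
      have h2 : round ((y - z) / w) + 1 ≤ round ((x - z) / w) := by
        rw [round_eq, round_eq]
        have : (y - z) / w + 1 / 2 + (1 : ℤ) ≤ (x - z) / w + 1 / 2 := by push_cast; linarith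
        calc ⌊(y - z) / w + 1 / 2⌋ + 1 = ⌊(y - z) / w + 1 / 2 + (1 : ℤ)⌋ := by
              rw [Int.floor_add_intCast]
          _ ≤ ⌊(x - z) / w + 1 / 2⌋ := Int.floor_le_floor this
      omega
    rw [hempty, measure_empty, ENNReal.toReal_zero, zero_div, habs]
    rw [max_eq_left]
    rw [sub_nonpos, le_div_iff₀ hw]
    linarith

/-- Collision probability of the one-dimensional random binning hash: for `w > 0` and
`z` uniform on `[0, w]`, the probability that `round((x−z)/w) = round((y−z)/w)`
equals `max(0, 1 − |x − y|/w)`. -/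
theorem lsh_collision_probability (w : ℝ) (hw : 0 < w) (x y : ℝ) :
    (volume {z ∈ Set.Icc (0 : ℝ) w |
        round ((x - z) / w) = round ((y - z) / w)}).toReal / w =
      max 0 (1 - |x - y| / w) := by
  rcases le_total y x with h | h
  · exact main2 w hw x y h
  · have hseteq : {z ∈ Set.Icc (0 : ℝ) w | round ((x - z) / w) = round ((y - z) / w)}
        = {z ∈ Set.Icc (0 : ℝ) w | round ((y - z) / w) = round ((x - z) / w)} := by
      ext z
      simp only [mem_sep_iff]
      exact and_congr_right fun _ => eq_comm
    rw [hseteq, abs_sub_comm]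
    exact main2 w hw y x h
end

section
/- Let x, y ∈ ℝ, let the width w > 0 be distributed as w ~ p(w) = w e^{-w}, and let z ~ Uniform([0,w]). Then E_{w,z}[1{h_{w,z}(x) = h_{w,z}(y)}] = e^{-|x−y|}, i.e., the expected collision probability of the random binning hash with Gamma-distributed width equals the Laplace kernel. -/
open MeasureTheory Real

/-- Random binning with Gamma-distributed grid width gives the Laplace kernel:
`∫₀^∞ w e^{-w} · max(0, 1 − |x−y|/w) dw = e^{-|x−y|}`.
The integrand `max(0, 1 − |x−y|/w)` is the collision probability of the hash
`h_{w,z}(t) = round((t−z)/w)` over `z ~ Uniform[0,w]`. -/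
theorem expected_collision_eq_laplace (x y : ℝ) :
    (∫ w in Set.Ioi (0 : ℝ), w * Real.exp (-w) * max 0 (1 - |x - y| / w)) =
      Real.exp (-|x - y|) := by
  set c := |x - y| with hc
  have hc0 : 0 ≤ c := abs_nonneg _
  have hcongr : ∀ w ∈ Set.Ioi (0:ℝ),
      w * Real.exp (-w) * max 0 (1 - c / w)
        = Set.indicator (Set.Ioi c) (fun w => (w - c) * Real.exp (-w)) w := by
    intro w hw
    have hw0 : (0:ℝ) < w := hw
    rcases lt_or_ge c w with h | h
    · rw [Set.indicator_of_mem (Set.mem_Ioi.mpr h)]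
      have hmax : max 0 (1 - c / w) = 1 - c / w := by
        rw [max_eq_right]
        have : c / w ≤ 1 := (div_le_one hw0).mpr h.le
        linarith
      rw [hmax]
      field_simp
    · rw [Set.indicator_of_notMem (by simpa using h)]
      have hmax : max 0 (1 - c / w) = 0 := by
        rw [max_eq_left]
        have : 1 ≤ c / w := (one_le_div hw0).mpr h
        linarith
      rw [hmax, mul_zero]
  rw [setIntegral_congr_fun measurableSet_Ioi hcongr,
    setIntegral_indicator measurableSet_Ioi]
  have hinter : Set.Ioi (0:ℝ) ∩ Set.Ioi c = Set.Ioi c := by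
    rw [Set.Ioi_inter_Ioi, max_eq_right hc0]
  rw [hinter]
  have key : ∫ w in Set.Ioi c, (w - c) * Real.exp (-w)
      = 0 - (-(c - c + 1) * Real.exp (-c)) := by
    apply integral_Ioi_of_hasDerivAt_of_nonneg
      (g := fun w => -(w - c + 1) * Real.exp (-w))
    · exact (Continuous.continuousWithinAt (by continuity))
    · intro w _
      have h1 : HasDerivAt (fun w : ℝ => -(w - c + 1)) (-1) w := by
        exact (((hasDerivAt_id w).sub_const c).add_const 1).neg
      have h2 : HasDerivAt (fun w : ℝ => Real.exp (-w)) (-Real.exp (-w)) w := by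
        simpa using ((hasDerivAt_id w).neg).exp
      have : HasDerivAt (fun w => -(w - c + 1) * Real.exp (-w))
          (-1 * Real.exp (-w) + -(w - c + 1) * -Real.exp (-w)) w := h1.mul h2
      convert this using 1
      ring
    · intro w hw
      have : (0:ℝ) ≤ w - c := by simp at hw; linarith
      positivity
    · have h1 : Filter.Tendsto (fun w : ℝ => w * Real.exp (-w)) Filter.atTop (nhds 0) := by
        simpa using tendsto_pow_mul_exp_neg_atTop_nhds_zero 1
      have h2 : Filter.Tendsto (fun w : ℝ => Real.exp (-w)) Filter.atTop (nhds 0) :=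
        Real.tendsto_exp_neg_atTop_nhds_zero
      have h3 : Filter.Tendsto (fun w : ℝ => -(w - c + 1) * Real.exp (-w))
          Filter.atTop (nhds (-0 + (c - 1) * 0)) := by
        refine ((h1.neg).add (h2.const_mul (c - 1))).congr fun w => ?_
        ring
      simpa using h3
  rw [key]
  simp
end

section
/- Let x¹ = ⋯ = x^{n/2} = −λ/n and x^{n/2+1} = ⋯ = xⁿ = λ/n in ℝ (with n even, 0 < λ, n ≥ 8λ), let β ∈ ℝⁿ have βᵢ = −1 for i ≤ n/2 and βᵢ = 1 for i > n/2, and let K̃ be the random-binning kernel matrix with bucket function rect and width density p(w) = we^{-w}. Then βᵀK̃β takes values in {0, n²/2}, and Pr[βᵀK̃β = n²/2] = 1 − e^{-2λ/n} ≤ 2λ/n. -/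
open MeasureTheory Matrix Real

/-!
Since `x = (λ/n) β`, each of the two clusters lies in a single bucket, so the kernel matrix is
the all-ones matrix when the two buckets coincide and the same-sign indicator
`(1 + βᵢβⱼ)/2` otherwise; as `∑ βᵢ = 0` the quadratic form is `0` or `n²/2` accordingly.
For a fixed width `w`, the offsets `z ∈ [0, w]` that separate `±b` (with `b = λ/n`) form an
interval of length `min w (2b)`, and `∫₀^∞ e^{-w} min w c dw = 1 - e^{-c}`.
-/

section BucketKernel

variable {ι α : Type*} [Fintype ι] [DecidableEq α]

theorem dotProduct_mulVec_eq_sum_sum (β : ι → ℝ) (K : Matrix ι ι ℝ) :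
    β ⬝ᵥ K *ᵥ β = ∑ i, ∑ j, β i * K i j * β j := by
  simp only [dotProduct, mulVec, Finset.mul_sum, mul_assoc]

theorem dotProduct_mulVec_bucketKernel (β : ι → ℝ) (hβ : ∀ i, β i = -1 ∨ β i = 1)
    (g : ℝ → α) :
    β ⬝ᵥ (of fun i j => if g (β i) = g (β j) then (1 : ℝ) else 0) *ᵥ β =
      if g (-1) = g 1 then (∑ i, β i) ^ 2
      else ((∑ i, β i) ^ 2 + (Fintype.card ι : ℝ) ^ 2) / 2 := by
  have hsq : ∀ i, β i * β i = 1 := fun i => by rcases hβ i with h | h <;> rw [h] <;> norm_num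
  rw [dotProduct_mulVec_eq_sum_sum, sq, Finset.sum_mul_sum]
  split_ifs with hg
  · refine Finset.sum_congr rfl fun i _ => Finset.sum_congr rfl fun j _ => ?_
    have hmerged : g (β i) = g (β j) := by
      rcases hβ i with h | h <;> rcases hβ j with h' | h' <;> simp [h, h', hg]
    simp [hmerged]
  · have hentry : ∀ i j,
        (if g (β i) = g (β j) then (1 : ℝ) else 0) = (1 + β i * β j) / 2 := by
      intro i j
      rcases hβ i with h | h <;> rcases hβ j with h' | h' <;> simp [h, h', hg, Ne.symm hg]
    have hcard : (Fintype.card ι : ℝ) ^ 2 = ∑ i, ∑ j, (β i * β i) * (β j * β j) := by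
      simp [hsq, sq]
    rw [hcard, ← Finset.sum_add_distrib, Finset.sum_div]
    refine Finset.sum_congr rfl fun i _ => ?_
    rw [← Finset.sum_add_distrib, Finset.sum_div]
    refine Finset.sum_congr rfl fun j _ => ?_
    simp only [of_apply, hentry]
    ring

end BucketKernel

theorem sum_fin_ite_lt_half_eq_zero {n : ℕ} (hn : Even n) :
    ∑ i : Fin n, (if (i : ℕ) < n / 2 then (-1 : ℝ) else 1) = 0 := by
  obtain ⟨m, rfl⟩ := hn
  rw [Fin.sum_univ_eq_sum_range (fun i => if i < (m + m) / 2 then (-1 : ℝ) else 1),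
    Finset.sum_range_add, show (m + m) / 2 = m by omega,
    Finset.sum_congr rfl fun i hi => if_pos (Finset.mem_range.mp hi)]
  simp

theorem dotProduct_mulVec_twoClusters {n : ℕ} (hn : Even n) (β : Fin n → ℝ)
    (hβ : ∀ i : Fin n, β i = if (i : ℕ) < n / 2 then -1 else 1) (b w z : ℝ) :
    β ⬝ᵥ (of fun i j =>
        if round ((β i * b - z) / w) = round ((β j * b - z) / w) then (1 : ℝ) else 0) *ᵥ β =
      if round ((-b - z) / w) = round ((b - z) / w) then 0 else (n : ℝ) ^ 2 / 2 := by
  have hsign : ∀ i, β i = -1 ∨ β i = 1 := fun i => by rw [hβ i]; split_ifs <;> simp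
  have hsum : ∑ i, β i = 0 := by simp only [hβ, sum_fin_ite_lt_half_eq_zero hn]
  rw [dotProduct_mulVec_bucketKernel β hsign (fun t => round ((t * b - z) / w)), hsum,
    Fintype.card_fin]
  simp only [neg_one_mul, one_mul]
  split_ifs <;> ring

theorem Int.floor_lt_floor_iff_exists {α : Type*} [Ring α] [LinearOrder α] [FloorRing α]
    {u v : α} : ⌊u⌋ < ⌊v⌋ ↔ ∃ k : ℤ, u < k ∧ (k : α) ≤ v :=
  ⟨fun h => ⟨⌊v⌋, Int.floor_lt.mp h, Int.floor_le v⟩,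
    fun ⟨_, huk, hkv⟩ => (Int.floor_lt.mpr huk).trans_le (Int.le_floor.mpr hkv)⟩

theorem round_ne_round_iff_exists {α : Type*} [Field α] [LinearOrder α] [IsStrictOrderedRing α]
    [FloorRing α] {u v : α} (huv : u ≤ v) :
    round u ≠ round v ↔ ∃ k : ℤ, u < k - 1 / 2 ∧ (k : α) - 1 / 2 ≤ v := by
  rw [round_eq, round_eq, ← (Int.floor_le_floor (add_le_add_left huv _)).lt_iff_ne,
    Int.floor_lt_floor_iff_exists]
  simp only [lt_sub_iff_add_lt, sub_le_iff_le_add]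

/-- With offset `z ∈ [0, w]`, the cell boundaries `(k - 1/2) w - z` can separate `±b` only for
`k = 0`, unless the cells are narrower than the gap `2b`. -/
theorem round_ne_round_iff {b w z : ℝ} (hb : 0 < b) (hw : 0 < w) (hz : z ∈ Set.Icc 0 w) :
    round ((-b - z) / w) ≠ round ((b - z) / w) ↔
      w ≤ 2 * b ∨ z ∈ Set.Ioc (w / 2 - b) (w / 2 + b) := by
  rw [round_ne_round_iff_exists (div_le_div_of_nonneg_right (by linarith) hw.le)]
  obtain ⟨hz0, hzw⟩ := hz
  constructor
  · rintro ⟨k, hlo, hhi⟩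
    rw [div_lt_iff₀ hw] at hlo
    rw [le_div_iff₀ hw] at hhi
    refine or_iff_not_imp_left.mpr fun hwb => ?_
    have hk : k = 0 := by
      have hgt : (-1 : ℝ) < k := lt_of_mul_lt_mul_right (by nlinarith) hw.le
      have hlt : (k : ℝ) < 1 := lt_of_mul_lt_mul_right (by nlinarith) hw.le
      have hbounds : -1 < k ∧ k < 1 := ⟨by exact_mod_cast hgt, by exact_mod_cast hlt⟩
      omega
    subst hk
    constructor <;> push_cast at hlo hhi <;> linarith
  · rintro (hwb | ⟨hlo, hhi⟩)
    · have hgap : (b - z) / w = (-b - z) / w + 2 * b / w := by ring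
      have hwide : 1 ≤ 2 * b / w := (one_le_div hw).mpr hwb
      refine ⟨⌊(-b - z) / w + 1 / 2⌋ + 1, ?_, ?_⟩ <;> push_cast
      · linarith [Int.lt_floor_add_one ((-b - z) / w + 1 / 2)]
      · linarith [Int.floor_le ((-b - z) / w + 1 / 2)]
    · refine ⟨0, ?_, ?_⟩ <;> push_cast
      · rw [div_lt_iff₀ hw]; linarith
      · rw [le_div_iff₀ hw]; linarith

theorem volume_round_ne_round {b w : ℝ} (hb : 0 < b) (hw : 0 < w) :
    volume {z ∈ Set.Icc 0 w | round ((-b - z) / w) ≠ round ((b - z) / w)} =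
      ENNReal.ofReal (min w (2 * b)) := by
  rcases le_or_gt w (2 * b) with hwb | hbw
  · have hall : {z ∈ Set.Icc 0 w | round ((-b - z) / w) ≠ round ((b - z) / w)} =
        Set.Icc 0 w :=
      Set.sep_eq_self_iff_mem_true.mpr fun z hz => (round_ne_round_iff hb hw hz).mpr (.inl hwb)
    rw [hall, Real.volume_Icc, min_eq_left hwb, sub_zero]
  · have hmid : {z ∈ Set.Icc 0 w | round ((-b - z) / w) ≠ round ((b - z) / w)} =
        Set.Ioc (w / 2 - b) (w / 2 + b) := by
      ext z
      constructor
      · rintro ⟨hz, hne⟩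
        exact ((round_ne_round_iff hb hw hz).mp hne).resolve_left hbw.not_ge
      · intro hz
        have hz' : z ∈ Set.Icc 0 w := ⟨by linarith [hz.1], by linarith [hz.2]⟩
        exact ⟨hz', (round_ne_round_iff hb hw hz').mpr (.inr hz)⟩
    rw [hmid, Real.volume_Ioc, min_eq_right hbw.le]
    ring_nf

theorem integral_mul_exp_neg_Ioc {c : ℝ} (hc : 0 ≤ c) :
    ∫ w in Set.Ioc 0 c, w * exp (-w) = 1 - (c + 1) * exp (-c) := by
  have hderiv : ∀ t ∈ Set.uIcc 0 c,
      HasDerivAt (fun t => -(t + 1) * exp (-t)) (t * exp (-t)) t := by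
    intro t _
    have hlin : HasDerivAt (fun t : ℝ => -(t + 1)) (-1) t := ((hasDerivAt_id t).add_const 1).neg
    exact (hlin.fun_mul (hasDerivAt_neg t).exp).congr_deriv (by ring)
  rw [← intervalIntegral.integral_of_le hc, intervalIntegral.integral_eq_sub_of_hasDerivAt hderiv
    ((by fun_prop : Continuous fun t : ℝ => t * exp (-t)).intervalIntegrable 0 c)]
  simp only [neg_add_rev, zero_add, neg_zero, exp_zero, mul_one, sub_neg_eq_add]
  ring

theorem integral_exp_neg_mul_min {c : ℝ} (hc : 0 ≤ c) :
    ∫ w in Set.Ioi 0, exp (-w) * min w c = 1 - exp (-c) := by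
  have hhead : ∫ w in Set.Ioc 0 c, exp (-w) * min w c = 1 - (c + 1) * exp (-c) := by
    rw [← integral_mul_exp_neg_Ioc hc]
    refine setIntegral_congr_fun measurableSet_Ioc fun w hw => ?_
    rw [min_eq_left hw.2, mul_comm]
  have htail : ∫ w in Set.Ioi c, exp (-w) * min w c = c * exp (-c) := by
    rw [setIntegral_congr_fun measurableSet_Ioi fun w hw => by rw [min_eq_right (le_of_lt hw)],
      integral_mul_const, integral_exp_neg_Ioi, mul_comm]
  have hint : IntegrableOn (fun w => exp (-w) * min w c) (Set.Ioi 0) := by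
    refine Integrable.mono' ((exp_neg_integrableOn_Ioi 0 one_pos).mul_const c)
      (by fun_prop : Continuous fun w => exp (-w) * min w c).aestronglyMeasurable
      (ae_restrict_of_forall_mem measurableSet_Ioi fun w hw => ?_)
    rw [norm_mul, Real.norm_of_nonneg (exp_pos _).le, Real.norm_of_nonneg (le_min hw.le hc),
      neg_one_mul]
    exact mul_le_mul_of_nonneg_left (min_le_right w c) (exp_pos _).le
  rw [← Set.Ioc_union_Ioi_eq_Ioi hc, setIntegral_union (Set.Ioc_disjoint_Ioi le_rfl)
    measurableSet_Ioi (hint.mono_set Set.Ioc_subset_Ioi_self)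
    (hint.mono_set (Set.Ioi_subset_Ioi hc)), hhead, htail]
  ring

theorem lower_bound_quadratic_form_distribution_general
    (n : ℕ) (hn_even : Even n) (hn_pos : 0 < n) (lam : ℝ) (hlam : 0 < lam)
    (x : Fin n → ℝ)
    (hx : ∀ i : Fin n, x i = if (i : ℕ) < n / 2 then -(lam / n) else lam / n)
    (β : Fin n → ℝ)
    (hβ : ∀ i : Fin n, β i = if (i : ℕ) < n / 2 then -1 else 1)
    (Ktil : ℝ → ℝ → Matrix (Fin n) (Fin n) ℝ)
    (hKtil : ∀ w z i j, Ktil w z i j =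
      if round ((x i - z) / w) = round ((x j - z) / w) then 1 else 0) :
    (∀ w z : ℝ, 0 < w → z ∈ Set.Icc 0 w →
        β ⬝ᵥ (Ktil w z).mulVec β = 0 ∨ β ⬝ᵥ (Ktil w z).mulVec β = (n : ℝ)^2 / 2) ∧
    (∫ w in Set.Ioi (0 : ℝ), w * Real.exp (-w) *
        ((volume {z ∈ Set.Icc (0 : ℝ) w |
            β ⬝ᵥ ((Ktil w z).mulVec β) = (n : ℝ)^2 / 2}).toReal / w)) =
      1 - Real.exp (-2 * lam / n) ∧
    1 - Real.exp (-2 * lam / n) ≤ 2 * lam / n := by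
  set b := lam / n
  have hb : 0 < b := div_pos hlam (Nat.cast_pos.mpr hn_pos)
  have hxβ : ∀ i, x i = β i * b := fun i => by rw [hx i, hβ i]; split_ifs <;> simp
  have hquad : ∀ w z, β ⬝ᵥ (Ktil w z) *ᵥ β =
      if round ((-b - z) / w) = round ((b - z) / w) then 0 else (n : ℝ) ^ 2 / 2 := by
    intro w z
    rw [← dotProduct_mulVec_twoClusters hn_even β hβ b w z]
    congr
    ext i j
    rw [hKtil, hxβ, hxβ, of_apply]
  have hn2 : (n : ℝ) ^ 2 / 2 ≠ 0 := by positivity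
  refine ⟨fun w z _ _ => ?_, ?_, ?_⟩
  · rw [hquad]
    split_ifs <;> simp
  · calc _ = ∫ w in Set.Ioi 0, exp (-w) * min w (2 * b) :=
          setIntegral_congr_fun measurableSet_Ioi fun w (hw : 0 < w) => by
            simp only [hquad, ite_eq_right_iff, hn2.symm, imp_false, ← ne_eq]
            rw [volume_round_ne_round hb hw, ENNReal.toReal_ofReal (by positivity)]
            field_simp
      _ = _ := by rw [integral_exp_neg_mul_min (by positivity), neg_mul, neg_div, mul_div_assoc]
  · rw [neg_mul, neg_div]
    linarith [one_sub_le_exp_neg (2 * lam / n)]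

/-- Lower-bound construction: two clusters of `n/2` points at `±λ/n` with signs `∓1`.
The random-binning quadratic form `βᵀK̃β` takes only the values `0` and `n²/2`, and
the probability (over `w` with density `we^{-w}` and `z ~ Uniform[0,w]`) that it equals
`n²/2` is `1 − e^{-2λ/n} ≤ 2λ/n`. -/
theorem lower_bound_quadratic_form_distribution
    (n : ℕ) (hn_even : Even n) (hn_pos : 0 < n) (lam : ℝ) (hlam : 0 < lam)
    (hn_lam : 8 * lam ≤ (n : ℝ))
    (x : Fin n → ℝ)
    (hx : ∀ i : Fin n, x i = if (i : ℕ) < n / 2 then -(lam / n) else lam / n)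
    (β : Fin n → ℝ)
    (hβ : ∀ i : Fin n, β i = if (i : ℕ) < n / 2 then -1 else 1)
    (Ktil : ℝ → ℝ → Matrix (Fin n) (Fin n) ℝ)
    (hKtil : ∀ w z i j, Ktil w z i j =
      if round ((x i - z) / w) = round ((x j - z) / w) then 1 else 0) :
    (∀ w z : ℝ, 0 < w → z ∈ Set.Icc 0 w →
        β ⬝ᵥ (Ktil w z).mulVec β = 0 ∨ β ⬝ᵥ (Ktil w z).mulVec β = (n : ℝ)^2 / 2) ∧
    (∫ w in Set.Ioi (0 : ℝ), w * Real.exp (-w) *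
        ((volume {z ∈ Set.Icc (0 : ℝ) w |
            β ⬝ᵥ ((Ktil w z).mulVec β) = (n : ℝ)^2 / 2}).toReal / w)) =
      1 - Real.exp (-2 * lam / n) ∧
    1 - Real.exp (-2 * lam / n) ≤ 2 * lam / n :=
  lower_bound_quadratic_form_distribution_general n hn_even hn_pos lam hlam x hx β hβ Ktil hKtil
end

section
/- Let f : ℝ → ℝ be even with support in [-1/2,1/2] and ‖f‖₂ = 1, and let p be a probability density on (0,∞). Fix x, y ∈ ℝ. For w ~ p and z ~ Uniform[0,w], define the estimator k̃ = f(h + (z−x)/w)·f(h' + (z−y)/w)·1{h = h'}, where h = round((x−z)/w), h' = round((y−z)/w). Then E[k̃] = E_{w∼p}[(f*f)((x−y)/w)], i.e., the one-dimensional WLSH estimator is unbiased for the WLSH kernel. -/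
open MeasureTheory Real

lemma wlsh_key (f : ℝ → ℝ) (hf_even : ∀ t, f (-t) = f t)
    (hf_supp : Function.support f ⊆ Set.Icc (-(1/2) : ℝ) (1/2))
    (x y w : ℝ) (hw : 0 < w) :
    (∫ z in Set.Icc (0 : ℝ) w,
          if round ((x - z) / w) = round ((y - z) / w) then
            f ((round ((x - z) / w) : ℝ) + (z - x) / w) *
              f ((round ((y - z) / w) : ℝ) + (z - y) / w)
          else 0) = w * ∫ s : ℝ, f s * f ((x - y) / w - s) := by
  have hw' : w ≠ 0 := hw.ne'
  set E : ℝ → ℝ := fun z =>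
    if round ((x - z) / w) = round ((y - z) / w) then
      f ((round ((x - z) / w) : ℝ) + (z - x) / w) *
        f ((round ((y - z) / w) : ℝ) + (z - y) / w)
    else 0 with hE
  have hf0 : ∀ t : ℝ, t ∉ Set.Icc (-(1/2) : ℝ) (1/2) → f t = 0 := by
    intro t ht
    by_contra h
    exact ht (hf_supp h)
  -- periodicity
  have hper : Function.Periodic E w := by
    intro z
    have h1 : (x - (z + w)) / w = (x - z) / w - 1 := by field_simp; ring
    have h2 : (y - (z + w)) / w = (y - z) / w - 1 := by field_simp; ring
    have h3 : ((z + w) - x) / w = (z - x) / w + 1 := by field_simp; ring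
    have h4 : ((z + w) - y) / w = (z - y) / w + 1 := by field_simp; ring
    have r1 : round ((x - z) / w - 1) = round ((x - z) / w) - 1 := by
      simpa using round_sub_int ((x - z) / w) 1
    have r2 : round ((y - z) / w - 1) = round ((y - z) / w) - 1 := by
      simpa using round_sub_int ((y - z) / w) 1
    simp only [hE, h1, h2, h3, h4, r1, r2]
    by_cases h : round ((x - z) / w) = round ((y - z) / w)
    · rw [if_pos (by omega), if_pos h]
      congr 1 <;> · congr 1; push_cast; ring
    · rw [if_neg (by omega), if_neg h]
  -- change window
  have step1 : (∫ z in Set.Icc (0 : ℝ) w, E z)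
      = ∫ z in Set.Ioc (x - w/2) (x + w/2), E z := by
    rw [integral_Icc_eq_integral_Ioc,
      ← intervalIntegral.integral_of_le hw.le,
      ← intervalIntegral.integral_of_le (by linarith : x - w/2 ≤ x + w/2)]
    have := hper.intervalIntegral_add_eq 0 (x - w/2)
    rw [zero_add] at this
    rw [this]
    congr 1
    ring
  -- identify with the product a.e.
  have step2 : (∫ z in Set.Ioc (x - w/2) (x + w/2), E z)
      = ∫ z in Set.Ioc (x - w/2) (x + w/2), f ((z - x)/w) * f ((z - y)/w) := by
    refine setIntegral_congr_ae measurableSet_Ioc ?_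
    have hz0 : ∀ᵐ z : ℝ, z ≠ y - w / 2 := by
      simp [ae_iff, Set.setOf_eq_eq_singleton]
    filter_upwards [hz0] with z hz hmem
    obtain ⟨hz1, hz2⟩ := hmem
    have hxle : -(1/2 : ℝ) ≤ (x - z)/w := by
      rw [le_div_iff₀ hw]; linarith
    have hxlt : (x - z)/w < 1/2 := by
      rw [div_lt_iff₀ hw]; linarith
    have hx0 : round ((x - z)/w) = 0 := by
      rw [round_eq, Int.floor_eq_zero_iff, Set.mem_Ico]
      constructor <;> linarith
    by_cases h : round ((x - z)/w) = round ((y - z)/w)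
    · have hy0 : round ((y - z)/w) = 0 := h ▸ hx0
      simp only [hE, if_pos h, hx0, hy0, Int.cast_zero, zero_add]
    · have hy0 : round ((y - z)/w) ≠ 0 := fun hc => h (hx0.trans hc.symm)
      have hyt : (y - z)/w < -(1/2) ∨ 1/2 ≤ (y - z)/w := by
        by_contra hcon
        push_neg at hcon
        apply hy0
        rw [round_eq, Int.floor_eq_zero_iff, Set.mem_Ico]
        constructor <;> linarith [hcon.1, hcon.2]
      have hne : (y - z)/w ≠ 1/2 := by
        intro hc
        apply hz
        have : y - z = w/2 := by
          field_simp at hc; linarith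
        linarith
      have hf2 : f ((z - y)/w) = 0 := by
        apply hf0
        intro hmem2
        obtain ⟨hm1, hm2⟩ := hmem2
        have e1 : (z - y)/w = -((y - z)/w) := by ring
        rcases hyt with hlt | hge
        · rw [e1] at hm2; linarith
        · have : (y - z)/w ≤ 1/2 := by rw [e1] at hm1; linarith
          exact hne (le_antisymm this hge)
      simp only [hE, if_neg h, hf2, mul_zero]
  -- extend to all of ℝ
  have step3 : (∫ z in Set.Ioc (x - w/2) (x + w/2), f ((z - x)/w) * f ((z - y)/w))
      = ∫ z : ℝ, f ((z - x)/w) * f ((z - y)/w) := by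
    rw [← integral_Icc_eq_integral_Ioc]
    symm
    rw [← integral_indicator measurableSet_Icc]
    congr 1
    funext z
    rw [Set.indicator_apply]
    split_ifs with hmem
    · rfl
    · rw [Set.mem_Icc, not_and_or] at hmem
      have : f ((z - x)/w) = 0 := by
        apply hf0
        intro hmem2
        obtain ⟨hm1, hm2⟩ := hmem2
        rw [le_div_iff₀ hw] at hm1
        rw [div_le_iff₀ hw] at hm2
        rcases hmem with h | h <;> push_neg at h <;> linarith
      rw [this, zero_mul]
  -- substitution
  have step4 : (∫ z : ℝ, f ((z - x)/w) * f ((z - y)/w))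
      = w * ∫ s : ℝ, f s * f ((x - y)/w - s) := by
    have A := MeasureTheory.Measure.integral_comp_div
      (fun u : ℝ => f (u - x/w) * f (u - y/w)) w
    have A' : (∫ z : ℝ, f ((z - x)/w) * f ((z - y)/w))
        = ∫ z : ℝ, (fun u : ℝ => f (u - x/w) * f (u - y/w)) (z / w) := by
      congr 1
      funext z
      show f ((z - x)/w) * f ((z - y)/w) = f (z/w - x/w) * f (z/w - y/w)
      rw [sub_div, sub_div]
    have B := MeasureTheory.integral_sub_left_eq_self
      (fun u : ℝ => f (u - x/w) * f (u - y/w)) volume (x/w)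
    have B' : (∫ s : ℝ, (fun u : ℝ => f (u - x/w) * f (u - y/w)) (x/w - s))
        = ∫ s : ℝ, f s * f ((x - y)/w - s) := by
      congr 1
      funext s
      show f (x/w - s - x/w) * f (x/w - s - y/w) = f s * f ((x - y)/w - s)
      rw [show x/w - s - x/w = -s by ring, hf_even,
        show x/w - s - y/w = (x - y)/w - s by rw [sub_div]; ring]
    rw [A', A, ← B, B', abs_of_pos hw, smul_eq_mul]
  show (∫ z in Set.Icc (0 : ℝ) w, E z) = w * ∫ s : ℝ, f s * f ((x - y) / w - s)
  exact step1.trans (step2.trans (step3.trans step4))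

/-- Unbiasedness of the one-dimensional WLSH estimator: with `f` even, supported in
`[-1/2,1/2]`, `‖f‖₂ = 1`, and `p` a probability density on `(0,∞)`, averaging the
estimator `f(h + (z−x)/w)·f(h' + (z−y)/w)·1{h = h'}` (with `h = round((x−z)/w)`,
`h' = round((y−z)/w)`) over `z ~ Uniform[0,w]` and `w ~ p` gives
`E_{w∼p}[(f*f)((x−y)/w)]`. -/
theorem wlsh_estimator_unbiased
    (f : ℝ → ℝ) (hf_even : ∀ t, f (-t) = f t)
    (hf_supp : Function.support f ⊆ Set.Icc (-(1/2) : ℝ) (1/2))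
    (hf_meas : Measurable f)
    (hf_norm : (∫ t : ℝ, (f t)^2) = 1)
    (p : ℝ → ℝ) (hp_nonneg : ∀ w, 0 ≤ p w)
    (hp_int : (∫ w in Set.Ioi (0 : ℝ), p w) = 1)
    (x y : ℝ) :
    (∫ w in Set.Ioi (0 : ℝ), p w *
        ((1 / w) * ∫ z in Set.Icc (0 : ℝ) w,
          if round ((x - z) / w) = round ((y - z) / w) then
            f ((round ((x - z) / w) : ℝ) + (z - x) / w) *
              f ((round ((y - z) / w) : ℝ) + (z - y) / w)
          else 0)) =
      ∫ w in Set.Ioi (0 : ℝ), p w * (∫ s : ℝ, f s * f ((x - y) / w - s)) := by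
  refine setIntegral_congr_fun measurableSet_Ioi fun w hw => ?_
  have hw' : (0 : ℝ) < w := hw
  rw [wlsh_key f hf_even hf_supp x y w hw', one_div,
    inv_mul_cancel_left₀ hw'.ne']
end

section
/- Let K, K̃ be symmetric PSD n×n matrices and λ, ε > 0 with ε < 1 such that (1−ε)(K+λI) ⪯ K̃+λI ⪯ (1+ε)(K+λI). Then for any y ∈ ℝⁿ, the solutions α = (K+λI)⁻¹y and α̃ = (K̃+λI)⁻¹y satisfy ‖(K+λI)^{1/2}(α̃ − α)‖₂ ≤ (ε/(1−ε))·‖(K+λI)^{-1/2} y‖₂. -/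
/-! Write `A = K + λI`, `B = K̃ + λI`, `e = α̃ − α`. Since `√A` is symmetric, the two sides are the
energy norms `√(eᵀAe)` and `√(yᵀA⁻¹y) = √(αᵀAα)`. From `Bα̃ = y = Aα` we get
`eᵀBe = eᵀ(A − B)α`. The lower sandwich bound gives `(1 − ε)·eᵀAe ≤ eᵀBe`, while the two bounds
together say `−εA ⪯ A − B ⪯ εA`, which by polarization gives
`2·uᵀ(A − B)w ≤ ε(uᵀAu + wᵀAw)`. Taking `u = (1 − ε)e`, `w = εα` yields
`(1 − ε)²·eᵀAe ≤ ε²·αᵀAα`. -/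

open Matrix Real

open scoped ComplexOrder in
/-- The positive semidefinite square root of a positive semidefinite matrix
(as defined in Mathlib of December 2024, since removed). -/
noncomputable def Matrix.PosSemidef.sqrt {n 𝕜 : Type*} [Fintype n] [DecidableEq n] [RCLike 𝕜]
    {A : Matrix n n 𝕜} (hA : A.PosSemidef) : Matrix n n 𝕜 :=
  (hA.1.eigenvectorUnitary : Matrix n n 𝕜) * diagonal ((↑) ∘ (√·) ∘ hA.1.eigenvalues) *
    (star hA.1.eigenvectorUnitary : Matrix n n 𝕜)

namespace Matrix

variable {n : Type*} [Fintype n]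

lemma mulVec_dotProduct_mulVec {m α : Type*} [Fintype m] [CommSemiring α]
    (M : Matrix m n α) (x y : n → α) : M *ᵥ x ⬝ᵥ M *ᵥ y = x ⬝ᵥ (Mᵀ * M) *ᵥ y := by
  rw [← mulVec_mulVec, dotProduct_transpose_mulVec, dotProduct_comm]

lemma mulVec_nonsing_inv_mulVec [DecidableEq n] {α : Type*} [CommRing α] {A : Matrix n n α}
    (hA : IsUnit A) (y : n → α) : A *ᵥ (A⁻¹ *ᵥ y) = y := by
  rw [mulVec_mulVec, mul_nonsing_inv _ ((isUnit_iff_isUnit_det A).mp hA), one_mulVec]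

lemma IsHermitian.dotProduct_mulVec_comm {α : Type*} [CommSemiring α] [StarRing α]
    [TrivialStar α] {M : Matrix n n α} (hM : M.IsHermitian) (u w : n → α) :
    w ⬝ᵥ M *ᵥ u = u ⬝ᵥ M *ᵥ w := by
  rw [← dotProduct_transpose_mulVec, ← conjTranspose_eq_transpose_of_trivial, hM.eq]

namespace PosSemidef

section RCLike

open scoped ComplexOrder

variable [DecidableEq n] {𝕜 : Type*} [RCLike 𝕜] {A : Matrix n n 𝕜}

lemma sqrt_mul_self (hA : A.PosSemidef) : hA.sqrt * hA.sqrt = A := by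
  have hD : diagonal ((RCLike.ofReal ∘ (√·) ∘ hA.1.eigenvalues : n → 𝕜)) *
      diagonal (RCLike.ofReal ∘ (√·) ∘ hA.1.eigenvalues) =
      diagonal (RCLike.ofReal ∘ hA.1.eigenvalues) := by
    rw [diagonal_mul_diagonal]
    congr 1
    funext i
    simp [← RCLike.ofReal_mul, Real.mul_self_sqrt (hA.eigenvalues_nonneg i)]
  conv_rhs => rw [hA.1.spectral_theorem, Unitary.conjStarAlgAut_apply]
  simp only [sqrt, Matrix.mul_assoc, ← Matrix.mul_assoc (star _ : Matrix n n 𝕜) (_ : Matrix n n 𝕜),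
    Unitary.coe_star_mul_self, Matrix.one_mul]
  rw [← Matrix.mul_assoc (diagonal _) (diagonal _), hD]

lemma isHermitian_sqrt (hA : A.PosSemidef) : hA.sqrt.IsHermitian := by
  simpa [sqrt, star_eq_conjTranspose] using isHermitian_mul_mul_conjTranspose
    (hA.1.eigenvectorUnitary : Matrix n n 𝕜)
    (isHermitian_diagonal_of_self_adjoint _ (by ext; simp))

end RCLike

variable [DecidableEq n] {A : Matrix n n ℝ}

lemma transpose_sqrt (hA : A.PosSemidef) : hA.sqrtᵀ = hA.sqrt := by
  rw [← conjTranspose_eq_transpose_of_trivial, hA.isHermitian_sqrt.eq]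

lemma sqrt_mulVec_dotProduct_sqrt_mulVec (hA : A.PosSemidef) (x : n → ℝ) :
    hA.sqrt *ᵥ x ⬝ᵥ hA.sqrt *ᵥ x = x ⬝ᵥ A *ᵥ x := by
  rw [mulVec_dotProduct_mulVec, hA.transpose_sqrt, hA.sqrt_mul_self]

lemma inv_sqrt_mulVec_dotProduct_inv_sqrt_mulVec (hA : A.PosSemidef) (x : n → ℝ) :
    hA.sqrt⁻¹ *ᵥ x ⬝ᵥ hA.sqrt⁻¹ *ᵥ x = x ⬝ᵥ A⁻¹ *ᵥ x := by
  rw [mulVec_dotProduct_mulVec, transpose_nonsing_inv, hA.transpose_sqrt, ← mul_inv_rev,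
    hA.sqrt_mul_self]

end PosSemidef

lemma two_mul_dotProduct_mulVec_le_of_posSemidef {A M : Matrix n n ℝ} (hM : M.IsHermitian)
    {c : ℝ} (h₁ : (c • A - M).PosSemidef) (h₂ : (c • A + M).PosSemidef) (u w : n → ℝ) :
    2 * (u ⬝ᵥ M *ᵥ w) ≤ c * (u ⬝ᵥ A *ᵥ u + w ⬝ᵥ A *ᵥ w) := by
  have hplus := h₁.dotProduct_mulVec_nonneg (u + w)
  have hminus := h₂.dotProduct_mulVec_nonneg (u - w)
  simp only [star_trivial, sub_mulVec, add_mulVec, smul_mulVec, mulVec_add, mulVec_sub,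
    dotProduct_add, add_dotProduct, dotProduct_sub, sub_dotProduct, dotProduct_smul,
    smul_eq_mul, hM.dotProduct_mulVec_comm u w] at hplus hminus
  linarith

lemma sqrt_dotProduct_mulVec_sub_le_of_sandwich {A B : Matrix n n ℝ} (hA : A.PosSemidef)
    (hB : B.IsHermitian) {ε : ℝ} (hε0 : 0 < ε) (hε1 : ε < 1)
    (h₁ : (B - (1 - ε) • A).PosSemidef) (h₂ : ((1 + ε) • A - B).PosSemidef)
    {x z : n → ℝ} (hxz : B *ᵥ x = A *ᵥ z) :
    √((x - z) ⬝ᵥ A *ᵥ (x - z)) ≤ ε / (1 - ε) * √(z ⬝ᵥ A *ᵥ z) := by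
  set e := x - z
  have hBe : e ⬝ᵥ (A - B) *ᵥ z = e ⬝ᵥ B *ᵥ e := by
    simp only [e, mulVec_sub, sub_mulVec, hxz]
  have hcoercive : (1 - ε) * (e ⬝ᵥ A *ᵥ e) ≤ e ⬝ᵥ B *ᵥ e := by
    have := h₁.dotProduct_mulVec_nonneg e
    simp only [star_trivial, sub_mulVec, smul_mulVec, dotProduct_sub, dotProduct_smul,
      smul_eq_mul] at this
    linarith
  have hpolar := two_mul_dotProduct_mulVec_le_of_posSemidef (hA.1.sub hB) (c := ε)
    (by convert h₁ using 1; module) (by convert h₂ using 1; module) ((1 - ε) • e) (ε • z)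
  simp only [mulVec_smul, dotProduct_smul, smul_dotProduct, smul_eq_mul, hBe] at hpolar
  have hpolar' : 2 * (1 - ε) * (e ⬝ᵥ B *ᵥ e) ≤
      (1 - ε) ^ 2 * (e ⬝ᵥ A *ᵥ e) + ε ^ 2 * (z ⬝ᵥ A *ᵥ z) := by
    nlinarith
  have hsq : (1 - ε) ^ 2 * (e ⬝ᵥ A *ᵥ e) ≤ ε ^ 2 * (z ⬝ᵥ A *ᵥ z) := by
    nlinarith
  have hz : 0 ≤ z ⬝ᵥ A *ᵥ z := by simpa using hA.dotProduct_mulVec_nonneg z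
  rw [Real.sqrt_le_iff]
  refine ⟨by positivity, ?_⟩
  rw [mul_pow, div_pow, Real.sq_sqrt hz, div_mul_eq_mul_div, le_div_iff₀ (by nlinarith)]
  linarith

end Matrix

/-- Why a spectral sandwich suffices for approximate KRR: if
`(1−ε)(K+λI) ⪯ K̃+λI ⪯ (1+ε)(K+λI)` (Loewner order), then the solutions
`α = (K+λI)⁻¹y` and `α̃ = (K̃+λI)⁻¹y` satisfy
`‖(K+λI)^{1/2}(α̃ − α)‖₂ ≤ (ε/(1−ε))·‖(K+λI)^{-1/2} y‖₂`. -/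
theorem krr_preconditioning_error_bound
    (n : ℕ) (K Ktil : Matrix (Fin n) (Fin n) ℝ)
    (hK : K.PosSemidef) (hKtil : Ktil.PosSemidef)
    (lam ε : ℝ) (hlam : 0 < lam) (hε0 : 0 < ε) (hε1 : ε < 1)
    (hsandwich₁ : ((Ktil + lam • 1) - (1 - ε) • (K + lam • 1)).PosSemidef)
    (hsandwich₂ : ((1 + ε) • (K + lam • 1) - (Ktil + lam • 1)).PosSemidef)
    (hKlam : (K + lam • (1 : Matrix (Fin n) (Fin n) ℝ)).PosSemidef)
    (y : Fin n → ℝ)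
    (α αtil : Fin n → ℝ)
    (hα : α = (K + lam • 1)⁻¹.mulVec y)
    (hαtil : αtil = (Ktil + lam • 1)⁻¹.mulVec y) :
    Real.sqrt ((hKlam.sqrt.mulVec (αtil - α)) ⬝ᵥ (hKlam.sqrt.mulVec (αtil - α))) ≤
      (ε / (1 - ε)) *
        Real.sqrt (((hKlam.sqrt⁻¹).mulVec y) ⬝ᵥ ((hKlam.sqrt⁻¹).mulVec y)) := by
  have hlamI : (lam • 1 : Matrix (Fin n) (Fin n) ℝ).PosDef := PosDef.one.smul hlam
  have hA := PosDef.posSemidef_add hK hlamI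
  have hB := PosDef.posSemidef_add hKtil hlamI
  have hAα : (K + lam • 1) *ᵥ α = y := hα ▸ mulVec_nonsing_inv_mulVec hA.isUnit y
  have hBαtil : (Ktil + lam • 1) *ᵥ αtil = y := hαtil ▸ mulVec_nonsing_inv_mulVec hB.isUnit y
  rw [hKlam.sqrt_mulVec_dotProduct_sqrt_mulVec, hKlam.inv_sqrt_mulVec_dotProduct_inv_sqrt_mulVec,
    ← hα, ← hAα, dotProduct_comm _ α]
  exact sqrt_dotProduct_mulVec_sub_le_of_sandwich hKlam hB.1 hε0 hε1 hsandwich₁ hsandwich₂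
    (hBαtil.trans hAα.symm)
end
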